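/- Let q_1 < q_2 < ⋯ < q_n be sites in {1, …, N} all of the same parity. Then for all 1 ≤ i < j ≤ n, the string operators satisfy the telescoping identity ∏_{k=i}^{j−1} g_{q_k, q_{k+1}} = g_{q_i, q_j}. In particular, the operators g_{q_i, q_{i+1}} (1 ≤ i ≤ n−1) appearing in the isolated-SPT stabilizer set 𝒮({q_1,…,q_n}) generate, under multiplication, all string operators g_{q_i, q_j} between any two points q_i < q_j of the set. -/

import Mathlib

open scoped Classical
open scoped Matrix
noncomputable section
namespace QStab

/-- The space of operators (matrices) on a chain of qubits indexed by `ι`. -/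
abbrev Op (ι : Type*) [Fintype ι] [DecidableEq ι] : Type _ :=
  Matrix (ι → Fin 2) (ι → Fin 2) ℂ

variable {ι : Type*} [Fintype ι] [DecidableEq ι]

/-- The Pauli `X` operator at site `i`. -/
def PX (i : ι) : Op ι :=
  Matrix.of fun f g => if f = Function.update g i (g i + 1) then 1 else 0

/-- The Pauli `Z` operator at site `i`. -/
def PZ (i : ι) : Op ι :=
  Matrix.of fun f g => if f = g then ((-1 : ℂ)) ^ ((f i : ℕ)) else 0

/-- The (ordered) product `∏ i, (X i)^(a i)`. -/
def XProd (a : ι → Fin 2) : Op ι :=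
  (Finset.univ.toList.map fun i => PX i ^ ((a i : ℕ))).prod

/-- The (ordered) product `∏ i, (Z i)^(b i)`. -/
def ZProd (b : ι → Fin 2) : Op ι :=
  (Finset.univ.toList.map fun i => PZ i ^ ((b i : ℕ))).prod

/-- `c` is one of the allowed phases `1, −1, i, −i` of a Pauli string. -/
def IsPhase (c : ℂ) : Prop := c = 1 ∨ c = -1 ∨ c = Complex.I ∨ c = -Complex.I

/-- `M` is a Pauli string: `M = c • (∏ i, (X i)^(a i)) * (∏ i, (Z i)^(b i))`. -/
def IsPauli (M : Op ι) : Prop :=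
  ∃ (c : ℂ) (a b : ι → Fin 2), IsPhase c ∧ M = c • (XProd a * ZProd b)

/-- `M` is a Pauli string acting as the identity on every site outside `A`. -/
def IsPauliSupportedOn (A : Finset ι) (M : Op ι) : Prop :=
  ∃ (c : ℂ) (a b : ι → Fin 2), IsPhase c ∧ (∀ i, i ∉ A → a i = 0 ∧ b i = 0) ∧
    M = c • (XProd a * ZProd b)

/-- `M` is a Pauli string acting trivially (as the identity) at the site `i`. -/
def ActsTriviallyAt (i : ι) (M : Op ι) : Prop :=
  ∃ (c : ℂ) (a b : ι → Fin 2), IsPhase c ∧ a i = 0 ∧ b i = 0 ∧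
    M = c • (XProd a * ZProd b)

/-- The function on all of `ι` agreeing with `f` on `A` and with `h` on `Aᶜ`. -/
def combine (A : Finset ι) (f : ↥A → Fin 2) (h : ↥(Aᶜ) → Fin 2) : ι → Fin 2 :=
  fun i => if hi : i ∈ A then f ⟨i, hi⟩ else h ⟨i, Finset.mem_compl.mpr hi⟩

/-- The partial trace over the qubits outside `A` (the reduced density matrix on `A`). -/
def ptrace (A : Finset ι) (ρ : Op ι) : Matrix (↥A → Fin 2) (↥A → Fin 2) ℂ :=
  Matrix.of fun f g => ∑ h : ↥(Aᶜ) → Fin 2, ρ (combine A f h) (combine A g h)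

/-- The rank-one projector `|ψ⟩⟨ψ|`. -/
def outer (ψ : (ι → Fin 2) → ℂ) : Op ι :=
  Matrix.of fun f g => ψ f * star (ψ g)

/-- `ψ` is a unit vector. -/
def IsUnitVec (ψ : (ι → Fin 2) → ℂ) : Prop :=
  ∑ f, Complex.normSq (ψ f) = 1

/-- The von Neumann entropy `−Tr(ρ log ρ)` of a Hermitian matrix, computed through its
eigenvalues (with the convention `0 log 0 = 0`, and junk value `0` on non-Hermitian input). -/
def vnEntropy {n : Type*} [Fintype n] [DecidableEq n] (ρ : Matrix n n ℂ) : ℝ :=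
  if h : ρ.IsHermitian then -∑ i, (h.eigenvalues i * Real.log (h.eigenvalues i)) else 0

/-- The von Neumann entanglement entropy of `ψ` in the region `A`:
`S_A(ψ) = −Tr(ρ_A log ρ_A)` where `ρ_A` is the reduced density matrix of `|ψ⟩⟨ψ|`. -/
def entEntropy (A : Finset ι) (ψ : (ι → Fin 2) → ℂ) : ℝ :=
  vnEntropy (ptrace A (outer ψ))

/-- The product of the `s i` over the subset `T` (in increasing order of indices). -/
def subProd {N : ℕ} (s : Fin N → Op ι) (T : Finset (Fin N)) : Op ι :=
  ((Finset.sort T (· ≤ ·)).map s).prod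

/-- `{s 0, …, s (N-1)}` is an independent set of `N` Hermitian pairwise commuting Pauli
strings: products over distinct subsets are pairwise distinct and no nonempty product
equals `±I`. -/
def IndepStabs {N : ℕ} (s : Fin N → Op ι) : Prop :=
  (∀ i, IsPauli (s i)) ∧ (∀ i, (s i).IsHermitian) ∧
  (∀ i j, Commute (s i) (s j)) ∧
  Function.Injective (subProd s) ∧
  (∀ T : Finset (Fin N), T.Nonempty → subProd s T ≠ 1 ∧ subProd s T ≠ -1)

/-- The 1-based label of the site `i : Fin N`, so that the qubits are labeled `1, …, N`. -/
def lbl {N : ℕ} (i : Fin N) : ℕ := (i : ℕ) + 1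

/-- The single-qubit operator `Z p` at the site with label `p` (1-based). -/
def ZSingle (N : ℕ) (p : ℕ) : Op (Fin N) :=
  ZProd fun i => if lbl i = p then 1 else 0

/-- The string of `Z`'s at the labels `p, p+2, …, q` (sites of the parity of `p` in `[p,q]`). -/
def ZStr (N : ℕ) (p q : ℕ) : Op (Fin N) :=
  ZProd fun i => if p ≤ lbl i ∧ lbl i ≤ q ∧ lbl i % 2 = p % 2 then 1 else 0

/-- The string operator `g_{p,q} = X p * (∏_{k=0}^{(q−p)/2−1} Z (p+2k+1)) * X q`
for labels `p < q` of the same parity.  In particular the cluster stabilizer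
`g i = X (i−1) * Z i * X (i+1)` is `GStr N (i-1) (i+1)`. -/
def GStr (N : ℕ) (p q : ℕ) : Op (Fin N) :=
  (XProd fun i => if lbl i = p ∨ lbl i = q then 1 else 0) *
    ZProd fun i => if p < lbl i ∧ lbl i < q ∧ ¬(lbl i % 2 = p % 2) then 1 else 0

/-- `G1 = ∏_{i even} Z i` (even labels). -/
def Gsym1 (N : ℕ) : Op (Fin N) := ZProd fun i => if lbl i % 2 = 0 then 1 else 0

/-- `G2 = ∏_{i odd} Z i` (odd labels). -/
def Gsym2 (N : ℕ) : Op (Fin N) := ZProd fun i => if lbl i % 2 = 1 then 1 else 0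

/-- The measurement channel `𝓔_S(ρ) = Π₊ ρ Π₊ + Π₋ ρ Π₋` with `Π± = (I ± S)/2`. -/
def measChannel (S ρ : Op ι) : Op ι :=
  ((2 : ℂ)⁻¹ • (1 + S)) * ρ * ((2 : ℂ)⁻¹ • (1 + S)) +
    ((2 : ℂ)⁻¹ • (1 - S)) * ρ * ((2 : ℂ)⁻¹ • (1 - S))

/-- Measurement-update map on stabilizer groups: if the measured Pauli `M` commutes with
every element of `G` the group is unchanged; otherwise the new group is generated by the
centralizer `C_G(M)` together with `ε • M` (where `ε` is the measurement outcome sign). -/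
def Meas (G : Submonoid (Op ι)) (M : Op ι) (ε : ℂ) : Submonoid (Op ι) :=
  if ∀ g ∈ G, M * g = g * M then G
  else Submonoid.closure ({g | g ∈ G ∧ M * g = g * M} ∪ {ε • M})

/-- The isolated-SPT stabilizer set `𝒮(A)`: the string operators `g_{q_i, q_{i+1}}` between
consecutive elements of `A`, together with the total `Z`-product `∏_{p ∈ A} Z p`. -/
def SPTstabs (N : ℕ) (A : Finset ℕ) : Set (Op (Fin N)) :=
  {m | (∃ p ∈ A, ∃ q ∈ A, p < q ∧ (∀ r ∈ A, ¬(p < r ∧ r < q)) ∧ m = GStr N p q) ∨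
    m = ZProd fun i => if lbl i ∈ A then 1 else 0}

/-- The block of the partition `P` containing `x`. -/
def blockOf (P : Finset (Finset ℕ)) (x : ℕ) : Finset ℕ :=
  P.sup fun A => if x ∈ A then A else ∅

/-- Partition update for the move “measure `Z i`”: `i` is split off into its own block. -/
def updZ (P : Finset (Finset ℕ)) (i : ℕ) : Finset (Finset ℕ) :=
  insert {i} ((P.image fun A => A.erase i).erase ∅)

/-- Partition update for the move “measure `g i`”: the blocks of `i−1` and `i+1` merge. -/
def updG (P : Finset (Finset ℕ)) (i : ℕ) : Finset (Finset ℕ) :=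
  insert (blockOf P (i - 1) ∪ blockOf P (i + 1))
    ((P.erase (blockOf P (i - 1))).erase (blockOf P (i + 1)))

/-- The partition of `{1, …, N}` into singletons. -/
def startPart (N : ℕ) : Finset (Finset ℕ) := (Finset.Icc 1 N).image fun i => {i}

/-- The matrix `M`, supported on `A`, viewed as an operator on the qubits in `A` only. -/
def restrictOp (A : Finset ι) (M : Op ι) : Matrix (↥A → Fin 2) (↥A → Fin 2) ℂ :=
  Matrix.of fun f g =>
    M (fun i => if hi : i ∈ A then f ⟨i, hi⟩ else 0)
      (fun i => if hi : i ∈ A then g ⟨i, hi⟩ else 0)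

/-!
On basis states `f : ι → Fin 2`, the `X`-string `∏ (X i)^(a i)` is the translation `f ↦ f + a`
and the `Z`-string `∏ (Z i)^(b i)` is diagonal with eigenvalue `∏ (-1)^(f i b i)`, so
`X`-strings multiply by adding exponents, as do `Z`-strings, and `Z^b X^a = (-1)^(a·b) X^a Z^b`.
In `g_{p,q} g_{q,r}` the `Z`'s of `g_{p,q}` sit strictly between `p` and `q`, away from the
`X`'s at `q` and `r`, so they commute past them; then `X q` cancels and the two `Z`-strings
join, giving `g_{p,r}`. The telescoping identity follows by induction on `j`.
-/

lemma neg_one_pow_fin_two_add {R : Type*} [Ring R] (x y : Fin 2) :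
    (-1 : R) ^ ((x + y : Fin 2) : ℕ) = (-1) ^ (x : ℕ) * (-1) ^ (y : ℕ) := by
  rw [Fin.val_add, ← neg_one_pow_eq_pow_mod_two, pow_add]

def xShift : Multiplicative (ι → Fin 2) →* Op ι where
  toFun v := Matrix.of fun f g => if f = g + v.toAdd then 1 else 0
  map_one' := by
    ext f g
    simp [Matrix.one_apply]
  map_mul' v w := by
    ext f g
    simp only [Matrix.of_apply, Matrix.mul_apply, toAdd_mul, mul_ite, mul_one, mul_zero,
      Finset.sum_ite_eq', Finset.mem_univ, if_true, add_assoc, add_comm v.toAdd]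

lemma PX_pow_eq_xShift (i : ι) (x : Fin 2) :
    PX i ^ (x : ℕ) = xShift (.ofAdd (Pi.single i x)) := by
  fin_cases x
  · simp
  · ext f g
    have hupdate : Function.update g i (g i + 1) = g + Pi.single i 1 := by
      ext j
      by_cases h : j = i <;> simp [h]
    simp [PX, xShift, hupdate]

lemma XProd_eq_xShift (a : ι → Fin 2) : XProd a = xShift (.ofAdd a) := by
  calc XProd a = xShift (Finset.univ.toList.map fun i => .ofAdd (Pi.single i (a i))).prod := by
        simp only [XProd, PX_pow_eq_xShift, map_list_prod, List.map_map, Function.comp_def]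
    _ = xShift (.ofAdd a) := by
        rw [Finset.prod_map_toList, ← ofAdd_sum, Finset.univ_sum_single]

def zPhase (b f : ι → Fin 2) : ℂ :=
  ∏ i, (-1 : ℂ) ^ ((f i * b i : Fin 2) : ℕ)

omit [DecidableEq ι] in
lemma zPhase_add_left (b f g : ι → Fin 2) : zPhase b (f + g) = zPhase b f * zPhase b g := by
  simp only [zPhase, Pi.add_apply, add_mul, neg_one_pow_fin_two_add, Finset.prod_mul_distrib]

omit [DecidableEq ι] in
lemma zPhase_add_right (b b' f : ι → Fin 2) : zPhase (b + b') f = zPhase b f * zPhase b' f := by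
  simp only [zPhase, Pi.add_apply, mul_add, neg_one_pow_fin_two_add, Finset.prod_mul_distrib]

omit [DecidableEq ι] in
lemma zPhase_eq_one {b f : ι → Fin 2} (h : ∀ i, f i * b i = 0) : zPhase b f = 1 := by
  simp [zPhase, h]

lemma PZ_pow (i : ι) (x : Fin 2) :
    PZ i ^ (x : ℕ) = Matrix.diagonal fun f => (-1 : ℂ) ^ ((f i * x : Fin 2) : ℕ) := by
  fin_cases x
  · simp
  · ext f g
    simp [PZ, Matrix.diagonal]

lemma ZProd_eq_diagonal (b : ι → Fin 2) : ZProd b = Matrix.diagonal (zPhase b) := by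
  calc ZProd b = Matrix.diagonalRingHom _ ℂ
        (Finset.univ.toList.map fun i f => (-1 : ℂ) ^ ((f i * b i : Fin 2) : ℕ)).prod := by
        simp only [ZProd, PZ_pow, map_list_prod, List.map_map, Function.comp_def]
        rfl
    _ = Matrix.diagonal (zPhase b) := by
        rw [Finset.prod_map_toList, Finset.prod_fn]
        rfl

lemma XProd_mul_XProd (a a' : ι → Fin 2) : XProd a * XProd a' = XProd (a + a') := by
  rw [XProd_eq_xShift, XProd_eq_xShift, XProd_eq_xShift, ← map_mul, ← ofAdd_add, add_comm]

lemma ZProd_mul_ZProd (b b' : ι → Fin 2) : ZProd b * ZProd b' = ZProd (b + b') := by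
  simp only [ZProd_eq_diagonal, Matrix.diagonal_mul_diagonal, ← zPhase_add_right]

lemma ZProd_mul_XProd (b a : ι → Fin 2) :
    ZProd b * XProd a = zPhase b a • (XProd a * ZProd b) := by
  ext f g
  simp only [ZProd_eq_diagonal, XProd_eq_xShift, xShift, MonoidHom.coe_mk, OneHom.coe_mk,
    Matrix.diagonal_mul, Matrix.mul_diagonal, Matrix.smul_apply, Matrix.of_apply, toAdd_ofAdd,
    smul_eq_mul]
  split_ifs with h
  · rw [h, zPhase_add_left]
    ring
  · simp

lemma GStr_mul_GStr {N p q r : ℕ} (hpq : p < q) (hqr : q < r) (hpar : p % 2 = q % 2) :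
    GStr N p q * GStr N q r = GStr N p r := by
  simp only [GStr, mul_assoc]
  rw [← mul_assoc (ZProd _) (XProd _), ZProd_mul_XProd, zPhase_eq_one, one_smul, mul_assoc,
    ← mul_assoc (XProd _), XProd_mul_XProd, ZProd_mul_ZProd]
  · congr 2 <;> funext i <;> simp only [Pi.add_apply] <;> split_ifs <;> first | rfl | omega
  · intro i
    split_ifs <;> first | rfl | omega

lemma prod_range_consecutive_eq {M : Type*} [Monoid M] (g : ℕ → ℕ → M) {i j : ℕ} (hij : i < j)
    (hg : ∀ k, i < k → k < j → g i k * g k (k + 1) = g i (k + 1)) :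
    ((List.range (j - i)).map fun t => g (i + t) (i + t + 1)).prod = g i j := by
  induction j, hij using Nat.le_induction with
  | base => simp
  | succ j hij ih =>
    have hle : i ≤ j := by omega
    rw [Nat.sub_add_comm hle, List.range_succ, List.map_append, List.prod_append,
      ih fun k hik hkj => hg k hik (by omega)]
    simpa [Nat.add_sub_cancel' hle] using hg j (by omega) (by omega)

theorem string_operators_telescope_general {N n : ℕ} (q : ℕ → ℕ)
    (hmono : ∀ k l, k < l → l < n → q k < q l)
    (hparity : ∀ k l, k < n → l < n → q k % 2 = q l % 2) :
    (∀ i j, i < j → j < n →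
      ((List.range (j - i)).map fun t => GStr N (q (i + t)) (q (i + t + 1))).prod
        = GStr N (q i) (q j)) ∧
    (∀ i j, i < j → j < n →
      GStr N (q i) (q j) ∈
        Submonoid.closure {m | ∃ k : ℕ, k + 1 < n ∧ m = GStr N (q k) (q (k + 1))}) := by
  have telescope : ∀ i j, i < j → j < n →
      ((List.range (j - i)).map fun t => GStr N (q (i + t)) (q (i + t + 1))).prod
        = GStr N (q i) (q j) := fun i j hij hjn =>
    prod_range_consecutive_eq (fun k l => GStr N (q k) (q l)) hij fun k hik hkj =>
      GStr_mul_GStr (hmono i k hik (by omega)) (hmono k (k + 1) (by omega) (by omega))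
        (hparity i k (by omega) (by omega))
  refine ⟨telescope, fun i j hij hjn => ?_⟩
  rw [← telescope i j hij hjn]
  refine Submonoid.list_prod_mem _ fun x hx => ?_
  obtain ⟨t, ht, rfl⟩ := List.mem_map.mp hx
  exact Submonoid.subset_closure ⟨i + t, by grind, rfl⟩

/-- Let `q 0 < q 1 < ⋯ < q (n−1)` be sites in `{1, …, N}`, all of the
same parity.  Then for all `i < j < n`, the string operators telescope:
`∏_{k=i}^{j−1} g_{q k, q (k+1)} = g_{q i, q j}`; in particular the consecutive string
operators of the isolated-SPT stabilizer set generate all string operators `g_{q i, q j}`. -/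
theorem string_operators_telescope {N n : ℕ} (q : ℕ → ℕ)
    (hmono : ∀ k l, k < l → l < n → q k < q l)
    (hrange : ∀ k, k < n → 1 ≤ q k ∧ q k ≤ N)
    (hparity : ∀ k l, k < n → l < n → q k % 2 = q l % 2) :
    (∀ i j, i < j → j < n →
      ((List.range (j - i)).map fun t => GStr N (q (i + t)) (q (i + t + 1))).prod
        = GStr N (q i) (q j)) ∧
    (∀ i j, i < j → j < n →
      GStr N (q i) (q j) ∈
        Submonoid.closure {m | ∃ k : ℕ, k + 1 < n ∧ m = GStr N (q k) (q (k + 1))}) :=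
  string_operators_telescope_general q hmono hparity

end QStab
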